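/- For every N ≥ 2 and γ > 0 there exist maximally monotone operators A, B on ℝ² (namely normal cones of two lines through the origin) such that the Douglas–Rachford iteration with relaxation λ = 1 started from any unit vector w¹ satisfies ‖T(w^N) − w^N‖² = ((N−1)^{N−1}/N^N) · ‖w¹ − w⋆‖², where w⋆ = 0 is a fixed point of the DR operator T. In particular the sublinear rate ((N−1)^{N−1}/N^N)‖w¹−w⋆‖² for the DR residual is tight. -/

import Mathlib

/-!
With `P` the first axis and `Q` the line through `(c, s)`, `c = cos θ = √((N-1)/N)`,
`s = sin θ = √(1/N)`, the DR operator is `c` times the rotation by `θ`, and `T - I` is `s` times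
the rotation by `θ + π/2`. Hence `‖w^N‖ = c^(N-1) ‖w¹‖` and
`‖T w^N - w^N‖² = s² c^(2(N-1)) = (1/N) ((N-1)/N)^(N-1)`.
-/

open Submodule RealInnerProductSpace

section DouglasRachford

variable {E : Type*} [NormedAddCommGroup E] [InnerProductSpace ℝ E]

/-- For `A = N_Q`, `B = N_P` and any `γ > 0`, the resolvents `J_{γA}`, `J_{γB}` are the orthogonal
projections onto `Q`, `P`, so `R_{γA}`, `R_{γB}` are the reflections in `Q`, `P`. -/
noncomputable def drOperator (P Q : Submodule ℝ E) [P.HasOrthogonalProjection]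
    [Q.HasOrthogonalProjection] (x : E) : E :=
  (1 / 2 : ℝ) • x + (1 / 2 : ℝ) • Q.reflection (P.reflection x)

variable (P Q : Submodule ℝ E) [P.HasOrthogonalProjection] [Q.HasOrthogonalProjection]

theorem drOperator_apply (x : E) :
    drOperator P Q x = (1 / 2 : ℝ) • x + (1 / 2 : ℝ) •
      ((2 : ℝ) • (Q.orthogonalProjectionOnto ((2 : ℝ) • (P.orthogonalProjectionOnto x : E) - x) : E)
        - ((2 : ℝ) • (P.orthogonalProjectionOnto x : E) - x)) := by
  simp only [drOperator, reflection_apply, ofNat_smul_eq_nsmul, starProjection_apply]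

theorem drOperator_zero : drOperator P Q 0 = 0 := by
  simp [drOperator]

end DouglasRachford

theorem reflection_span_unit_apply {E : Type*} [NormedAddCommGroup E] [InnerProductSpace ℝ E]
    {v : E} (hv : ‖v‖ = 1) (x : E) :
    (ℝ ∙ v).reflection x = (2 * ⟪v, x⟫) • v - x := by
  rw [reflection_apply, starProjection_unit_singleton ℝ hv, mul_smul, two_smul, two_smul]

theorem norm_orbit_eq {X : Type*} [SeminormedAddGroup X] {T : X → X} {r : ℝ}
    (hT : ∀ x, ‖T x‖ = r * ‖x‖) {w : ℕ → X} (hw : ∀ k, w (k + 1) = T (w k)) (k n : ℕ) :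
    ‖w (k + n)‖ = r ^ n * ‖w k‖ := by
  induction n with
  | zero => simp
  | succ n ih => rw [← add_assoc, hw, hT, ih, pow_succ, mul_assoc, mul_left_comm]

section Plane

local notation "ℝ²" => EuclideanSpace ℝ (Fin 2)

theorem EuclideanSpace.norm_sq_fin_two (x : ℝ²) : ‖x‖ ^ 2 = x 0 ^ 2 + x 1 ^ 2 := by
  simp [EuclideanSpace.norm_sq_eq, Fin.sum_univ_two]

theorem EuclideanSpace.inner_fin_two (x y : ℝ²) : ⟪x, y⟫ = x 0 * y 0 + x 1 * y 1 := by
  simp [PiLp.inner_apply, Fin.sum_univ_two, mul_comm]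

/-- The rotation by the angle `θ` with `(cos θ, sin θ) = (c, s)`. -/
def planeRotation (c s : ℝ) (x : ℝ²) : ℝ² := !₂[c * x 0 - s * x 1, s * x 0 + c * x 1]

variable {c s : ℝ}

theorem norm_planeRotation (hcs : c ^ 2 + s ^ 2 = 1) (x : ℝ²) :
    ‖planeRotation c s x‖ = ‖x‖ := by
  rw [← sq_eq_sq₀ (norm_nonneg _) (norm_nonneg _), EuclideanSpace.norm_sq_fin_two,
    EuclideanSpace.norm_sq_fin_two]
  simp only [planeRotation, Fin.isValue, Matrix.cons_val_zero, Matrix.cons_val_one,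
    Matrix.cons_val_fin_one]
  linear_combination (x 0 ^ 2 + x 1 ^ 2) * hcs

theorem norm_vec_fin_two (hcs : c ^ 2 + s ^ 2 = 1) : ‖!₂[c, s]‖ = 1 := by
  rw [← sq_eq_sq₀ (norm_nonneg _) zero_le_one, EuclideanSpace.norm_sq_fin_two]
  simpa using hcs

theorem drOperator_lines_eq (hcs : c ^ 2 + s ^ 2 = 1) (x : ℝ²) :
    drOperator (ℝ ∙ !₂[1, 0]) (ℝ ∙ !₂[c, s]) x = c • planeRotation c s x := by
  have he : ‖!₂[(1 : ℝ), 0]‖ = 1 := norm_vec_fin_two (by norm_num)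
  simp only [drOperator, reflection_span_unit_apply he, reflection_span_unit_apply (norm_vec_fin_two hcs), EuclideanSpace.inner_fin_two, planeRotation]
  ext i
  fin_cases i
  · simp only [one_div, Fin.isValue, Matrix.cons_val_zero, one_mul, Matrix.cons_val_one,
      Matrix.cons_val_fin_one, zero_mul, add_zero, PiLp.sub_apply, PiLp.smul_apply, smul_eq_mul,
      mul_one, mul_zero, zero_sub, mul_neg, Fin.zero_eta, PiLp.add_apply]
    ring
  · simp only [one_div, Fin.isValue, Matrix.cons_val_zero, one_mul, Matrix.cons_val_one,
      Matrix.cons_val_fin_one, zero_mul, add_zero, PiLp.sub_apply, PiLp.smul_apply, smul_eq_mul,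
      mul_one, mul_zero, zero_sub, mul_neg, Fin.mk_one, PiLp.add_apply, sub_neg_eq_add]
    linear_combination -x 1 * hcs

theorem drOperator_lines_sub_eq (hcs : c ^ 2 + s ^ 2 = 1) (x : ℝ²) :
    drOperator (ℝ ∙ !₂[1, 0]) (ℝ ∙ !₂[c, s]) x - x = s • planeRotation (-s) c x := by
  rw [drOperator_lines_eq hcs]
  ext i
  fin_cases i
  · simp only [planeRotation, Fin.isValue, Fin.zero_eta, PiLp.sub_apply, PiLp.smul_apply,
      Matrix.cons_val_zero, smul_eq_mul, neg_mul]
    linear_combination x 0 * hcs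
  · simp only [planeRotation, Fin.isValue, Fin.mk_one, PiLp.sub_apply, PiLp.smul_apply,
      Matrix.cons_val_one, Matrix.cons_val_fin_one, smul_eq_mul, neg_mul]
    linear_combination x 1 * hcs

theorem norm_drOperator_lines (hcs : c ^ 2 + s ^ 2 = 1) (hc : 0 ≤ c) (x : ℝ²) :
    ‖drOperator (ℝ ∙ !₂[1, 0]) (ℝ ∙ !₂[c, s]) x‖ = c * ‖x‖ := by
  rw [drOperator_lines_eq hcs, norm_smul, norm_planeRotation hcs, Real.norm_of_nonneg hc]

theorem norm_drOperator_lines_sub (hcs : c ^ 2 + s ^ 2 = 1) (hs : 0 ≤ s) (x : ℝ²) :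
    ‖drOperator (ℝ ∙ !₂[1, 0]) (ℝ ∙ !₂[c, s]) x - x‖ = s * ‖x‖ := by
  rw [drOperator_lines_sub_eq hcs, norm_smul, norm_planeRotation (by linear_combination hcs),
    Real.norm_of_nonneg hs]

end Plane

theorem inv_mul_sub_one_div_pow {N : ℕ} (hN : 1 ≤ N) :
    (1 / N : ℝ) * (((N : ℝ) - 1) / N) ^ (N - 1) =
      ((N - 1 : ℕ) ^ (N - 1 : ℕ) : ℝ) / (N : ℝ) ^ N := by
  obtain ⟨n, rfl⟩ := Nat.exists_eq_add_of_le' hN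
  have : (n : ℝ) + 1 ≠ 0 := by positivity
  simp only [Nat.cast_add, Nat.cast_one, one_div, add_sub_cancel_right, add_tsub_cancel_right,
    div_pow, pow_succ]
  field_simp

theorem stmt3 (N : ℕ) (hN : 2 ≤ N) :
    ∃ P Q : Submodule ℝ (EuclideanSpace ℝ (Fin 2)),
      ∀ T : EuclideanSpace ℝ (Fin 2) → EuclideanSpace ℝ (Fin 2),
        (∀ x, T x = (1/2 : ℝ) • x + (1/2 : ℝ) •
            ((2 : ℝ) • (Submodule.orthogonalProjectionOnto Q
                ((2 : ℝ) • (Submodule.orthogonalProjectionOnto P x : EuclideanSpace ℝ (Fin 2)) - x) :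
                  EuclideanSpace ℝ (Fin 2)) -
              ((2 : ℝ) • (Submodule.orthogonalProjectionOnto P x : EuclideanSpace ℝ (Fin 2)) - x))) →
        T 0 = 0 ∧
        ∀ w1 : EuclideanSpace ℝ (Fin 2), ‖w1‖ = 1 →
          ∀ w : ℕ → EuclideanSpace ℝ (Fin 2), w 1 = w1 → (∀ k, w (k + 1) = T (w k)) →
            ‖T (w N) - w N‖ ^ 2 =
              (((N - 1 : ℕ) ^ (N - 1 : ℕ) : ℝ) / (N : ℝ) ^ N) * ‖w1 - 0‖ ^ 2 := by
  have hN1 : (1 : ℝ) ≤ N := by exact_mod_cast (by omega : 1 ≤ N)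
  set c := √(((N : ℝ) - 1) / N)
  set s := √(1 / N)
  have hc2 : c ^ 2 = ((N : ℝ) - 1) / N := Real.sq_sqrt (by bound)
  have hs2 : s ^ 2 = 1 / N := Real.sq_sqrt (by positivity)
  have hcs : c ^ 2 + s ^ 2 = 1 := by
    rw [hc2, hs2]
    field_simp
    ring
  refine ⟨ℝ ∙ !₂[1, 0], ℝ ∙ !₂[c, s], fun T hT => ?_⟩
  obtain rfl : T = drOperator _ _ := funext fun x => (hT x).trans (drOperator_apply _ _ x).symm
  refine ⟨drOperator_zero _ _, fun w1 hw1 w hw_one hw => ?_⟩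
  have hwN : ‖w N‖ = c ^ (N - 1) := by
    have := norm_orbit_eq (norm_drOperator_lines hcs (Real.sqrt_nonneg _)) hw 1 (N - 1)
    rwa [Nat.add_sub_cancel' (by omega), hw_one, hw1, mul_one] at this
  rw [norm_drOperator_lines_sub hcs (Real.sqrt_nonneg _), hwN, sub_zero, hw1, one_pow, mul_one,
    mul_pow, ← pow_mul, mul_comm (N - 1), pow_mul, hc2, hs2, inv_mul_sub_one_div_pow (by omega)]
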